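/- The expected overlap upper bound for Bitmap-Next satisfies: if r and s each consist of n tokens hashed uniformly and independently into b bits with n ≤ b, then the popcount of each bitmap is exactly n, and hence the overlap upper bound ⌊(2n − hammingDist)/2⌋ equals n − hammingDist/2 ≥ n − min(n, n) ≥ 0; in particular, for any two sets of sizes |r|, |s| ≤ b, the Bitmap-Next overlap bound ⌊(|r|+|s|−hammingDist(b_r,b_s))/2⌋ is at least |r ∩ s| and at most min(|r|,|s|). -/

import Mathlib

/-- Insert a bit into the bitmap at position `i`, or at the next (circularly)
unset position after `i` if `i` is already set (Bitmap-Next insertion). -/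
def insertNext {b : ℕ} [NeZero b] (bm : Fin b → Bool) (i : Fin b) : Fin b → Bool :=
  match ((List.range b).map (fun k => i + Fin.ofNat b k)).find? (fun j => !bm j) with
  | some j => Function.update bm j true
  | none => bm

/-- The Bitmap-Next bitmap of a list of tokens under hash function `h`. -/
def bitmapNext {T : Type*} {b : ℕ} [NeZero b] (h : T → Fin b) (s : List T) : Fin b → Bool :=
  s.foldl (fun bm t => insertNext bm (h t)) (fun _ => false)

/-! Writing `A`, `B` for the sets of bits set in `b_r`, `b_s`, one has
`hammingDist b_r b_s = #A + #B - 2 #(A ∩ B)`, and `#A = |r|`, `#B = |s|` because each insertion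
into a non-full bitmap sets exactly one new bit. So the bound is exactly `#(A ∩ B)`, which is at
most `min |r| |s|`. For the lower bound, Bitmap-Next insertion commutes and is monotone in the
bitmap, so the bitmap of the common tokens `r ∩ s` lies below both `b_r` and `b_s`; it has
`|r ∩ s|` bits, all in `A ∩ B`. -/

open Finset

section TrueSet

variable {ι : Type*}

theorem update_true_eq_false_iff [DecidableEq ι] {f : ι → Bool} {a i : ι} :
    Function.update f a true i = false ↔ i ≠ a ∧ f i = false := by
  by_cases hi : i = a <;> simp [hi]

theorem le_update_true [DecidableEq ι] (f : ι → Bool) (a : ι) : f ≤ Function.update f a true :=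
  le_update_iff.2 ⟨Bool.le_true _, fun _ _ => le_rfl⟩

variable [Fintype ι]

def trueSet (f : ι → Bool) : Finset ι := {i | f i = true}

@[simp]
theorem mem_trueSet {f : ι → Bool} {i : ι} : i ∈ trueSet f ↔ f i = true := by
  simp [trueSet]

theorem trueSet_mono {f g : ι → Bool} (hfg : f ≤ g) : trueSet f ⊆ trueSet g := fun i hi =>
  mem_trueSet.2 (Bool.le_iff_imp.1 (hfg i) (mem_trueSet.1 hi))

theorem trueSet_update_true [DecidableEq ι] (f : ι → Bool) (a : ι) :
    trueSet (Function.update f a true) = insert a (trueSet f) := by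
  ext i
  by_cases hi : i = a <;> simp [hi]

theorem hammingDist_add_two_mul_card_trueSet_inter [DecidableEq ι] (f g : ι → Bool) :
    hammingDist f g + 2 * #(trueSet f ∩ trueSet g) = #(trueSet f) + #(trueSet g) := by
  have hdiff : ({i | f i ≠ g i} : Finset ι) =
      (trueSet f ∪ trueSet g) \ (trueSet f ∩ trueSet g) := by
    ext i
    simp only [mem_filter, mem_univ, true_and, mem_sdiff, mem_union, mem_inter, mem_trueSet]
    cases f i <;> cases g i <;> decide
  have := card_union_add_card_inter (trueSet f) (trueSet g)
  have := card_le_card (inter_subset_union (s := trueSet f) (t := trueSet g))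
  rw [hammingDist, hdiff, card_sdiff_of_subset inter_subset_union]
  omega

end TrueSet

section InsertNext

variable {b : ℕ} [NeZero b]

def nextFree (bm : Fin b → Bool) (i : Fin b) : Option (Fin b) :=
  ((List.range b).map (fun k => i + Fin.ofNat b k)).find? (fun j => !bm j)

theorem insertNext_of_nextFree_eq_none {bm : Fin b → Bool} {i : Fin b}
    (h : nextFree bm i = none) : insertNext bm i = bm := by
  change (match nextFree bm i with | some j => Function.update bm j true | none => bm) = _
  rw [h]

theorem insertNext_of_nextFree_eq_some {bm : Fin b → Bool} {i a : Fin b}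
    (h : nextFree bm i = some a) : insertNext bm i = Function.update bm a true := by
  change (match nextFree bm i with | some j => Function.update bm j true | none => bm) = _
  rw [h]

theorem insertNext_congr {bm : Fin b → Bool} {i j : Fin b} (h : nextFree bm i = nextFree bm j) :
    insertNext bm i = insertNext bm j := by
  cases hi : nextFree bm i with
  | none => rw [insertNext_of_nextFree_eq_none hi, insertNext_of_nextFree_eq_none (h ▸ hi)]
  | some a => rw [insertNext_of_nextFree_eq_some hi, insertNext_of_nextFree_eq_some (h ▸ hi)]

theorem val_add_ofNat_sub_self (i : Fin b) {k : ℕ} (hk : k < b) :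
    (i + Fin.ofNat b k - i).val = k := by
  rw [add_sub_cancel_left, Fin.val_ofNat, Nat.mod_eq_of_lt hk]

theorem val_sub_eq_add_val_sub {i a y : Fin b} (h : (a - i).val ≤ (y - i).val) :
    (y - i).val = (a - i).val + (y - a).val := by
  rw [← sub_sub_sub_cancel_right y a i, Fin.sub_val_of_le (Fin.le_def.2 h)]
  omega

theorem nextFree_eq_none_iff {bm : Fin b → Bool} {i : Fin b} :
    nextFree bm i = none ↔ ∀ j, bm j = true := by
  simp only [nextFree, List.find?_eq_none, List.mem_map, List.mem_range, Bool.not_eq_true',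
    Bool.not_eq_false, forall_exists_index, and_imp, forall_apply_eq_imp_iff₂]
  refine ⟨fun h j => ?_, fun h k _ => h _⟩
  simpa [add_sub_cancel] using h (j - i).val (j - i).isLt

theorem exists_nextFree_eq_some {bm : Fin b → Bool} (hfree : ¬∀ j, bm j = true) (i : Fin b) :
    ∃ a, nextFree bm i = some a :=
  Option.ne_none_iff_exists'.1 (mt nextFree_eq_none_iff.1 hfree)

theorem nextFree_eq_some_iff {bm : Fin b → Bool} {i a : Fin b} :
    nextFree bm i = some a ↔ bm a = false ∧ ∀ j, bm j = false → (a - i).val ≤ (j - i).val := by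
  simp only [nextFree, List.find?_eq_some_iff_getElem, Bool.not_eq_true', List.length_map,
    List.length_range, List.getElem_map, List.getElem_range, Bool.not_not]
  refine and_congr_right fun _ => ⟨?_, fun hmin => ?_⟩
  · rintro ⟨k, hk, rfl, hbefore⟩ j hj
    rw [val_add_ofNat_sub_self i hk]
    by_contra! hlt
    have := hbefore _ hlt
    simp_all [add_sub_cancel]
  · refine ⟨(a - i).val, (a - i).isLt, by simp, fun k hk => ?_⟩
    by_contra hfree
    have := hmin _ (Bool.eq_false_iff.2 hfree)
    rw [val_add_ofNat_sub_self i (hk.trans (a - i).isLt)] at this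
    omega

theorem nextFree_eq_of_forall_val_sub {bm : Fin b → Bool} {i k : Fin b} (d : ℕ)
    (h : ∀ y, bm y = false → (y - i).val = d + (y - k).val) : nextFree bm i = nextFree bm k := by
  cases hk : nextFree bm k with
  | none => exact nextFree_eq_none_iff.2 (nextFree_eq_none_iff.1 hk)
  | some a =>
    obtain ⟨ha, hmin⟩ := nextFree_eq_some_iff.1 hk
    refine nextFree_eq_some_iff.2 ⟨ha, fun y hy => ?_⟩
    have := hmin y hy
    rw [h a ha, h y hy]
    omega

theorem nextFree_update_of_ne {bm : Fin b → Bool} {i a c : Fin b} (hi : nextFree bm i = some c)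
    (hca : c ≠ a) : nextFree (Function.update bm a true) i = some c := by
  obtain ⟨hc, hmin⟩ := nextFree_eq_some_iff.1 hi
  exact nextFree_eq_some_iff.2 ⟨update_true_eq_false_iff.2 ⟨hca, hc⟩,
    fun y hy => hmin y (update_true_eq_false_iff.1 hy).2⟩

/-- Once `a` is taken, probing from `i` continues exactly as probing from `a`. -/
theorem nextFree_update_of_eq {bm : Fin b → Bool} {i a : Fin b} (hi : nextFree bm i = some a) :
    nextFree (Function.update bm a true) i = nextFree (Function.update bm a true) a :=
  nextFree_eq_of_forall_val_sub (a - i).val fun y hy =>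
    val_sub_eq_add_val_sub ((nextFree_eq_some_iff.1 hi).2 y (update_true_eq_false_iff.1 hy).2)

theorem insertNext_right_comm (bm : Fin b → Bool) (i j : Fin b) :
    insertNext (insertNext bm i) j = insertNext (insertNext bm j) i := by
  by_cases hfull : ∀ t, bm t = true
  · have hnone (k : Fin b) : insertNext bm k = bm :=
      insertNext_of_nextFree_eq_none (nextFree_eq_none_iff.2 hfull)
    simp only [hnone]
  obtain ⟨a, hi⟩ := exists_nextFree_eq_some hfull i
  obtain ⟨c, hj⟩ := exists_nextFree_eq_some hfull j
  rw [insertNext_of_nextFree_eq_some hi, insertNext_of_nextFree_eq_some hj]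
  by_cases hac : a = c
  · subst hac
    exact insertNext_congr ((nextFree_update_of_eq hj).trans (nextFree_update_of_eq hi).symm)
  · rw [insertNext_of_nextFree_eq_some (nextFree_update_of_ne hj (Ne.symm hac)),
      insertNext_of_nextFree_eq_some (nextFree_update_of_ne hi hac)]
    exact Function.update_comm hac true true bm

instance : RightCommutative (insertNext (b := b)) := ⟨insertNext_right_comm⟩

theorem le_insertNext (bm : Fin b → Bool) (i : Fin b) : bm ≤ insertNext bm i := by
  cases h : nextFree bm i with
  | none => rw [insertNext_of_nextFree_eq_none h]
  | some a => rw [insertNext_of_nextFree_eq_some h]; exact le_update_true bm a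

theorem insertNext_mono {bm bm' : Fin b → Bool} (hle : bm ≤ bm') (i : Fin b) :
    insertNext bm i ≤ insertNext bm' i := by
  by_cases hfull : ∀ t, bm' t = true
  · rw [insertNext_of_nextFree_eq_none (nextFree_eq_none_iff.2 hfull)]
    exact fun t => (hfull t).symm ▸ Bool.le_true _
  obtain ⟨a', ha'⟩ := exists_nextFree_eq_some hfull i
  obtain ⟨ha'free, hmin'⟩ := nextFree_eq_some_iff.1 ha'
  have hle_false {t : Fin b} (ht : bm' t = false) : bm t = false := by
    have := hle t
    rw [ht] at this
    exact le_bot_iff.1 this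
  obtain ⟨a, ha⟩ := exists_nextFree_eq_some (bm := bm)
    (fun h => absurd (h a') (by simp [hle_false ha'free])) i
  obtain ⟨-, hmin⟩ := nextFree_eq_some_iff.1 ha
  rw [insertNext_of_nextFree_eq_some ha, insertNext_of_nextFree_eq_some ha']
  refine update_le_iff.2 ⟨?_, fun t _ => (hle t).trans (le_update_true bm' a' t)⟩
  by_cases haa' : a = a'
  · simp [haa']
  -- `a` and `a'` are each no farther from `i` than the other, hence equal
  have hset : bm' a = true := by
    by_contra! hfree
    have := hmin a' (hle_false ha'free)
    have := hmin' a (Bool.eq_false_iff.2 hfree)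
    exact haa' (sub_left_inj.1 (Fin.ext (show (a - i).val = (a' - i).val by omega)))
  simp [Function.update_of_ne haa', hset]

theorem foldl_insertNext_mono {l₁ l₂ : List (Fin b)} (hl : l₁.Sublist l₂)
    {bm bm' : Fin b → Bool} (hle : bm ≤ bm') :
    l₁.foldl insertNext bm ≤ l₂.foldl insertNext bm' := by
  induction hl generalizing bm bm' with
  | slnil => exact hle
  | cons a _ ih => exact ih (hle.trans (le_insertNext bm' a))
  | cons_cons a _ ih => exact ih (insertNext_mono hle a)

theorem card_trueSet_insertNext {bm : Fin b → Bool} (hlt : #(trueSet bm) < b) (i : Fin b) :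
    #(trueSet (insertNext bm i)) = #(trueSet bm) + 1 := by
  have hfree : ¬∀ t, bm t = true := fun hfull => by
    simp [eq_univ_of_forall fun t => mem_trueSet.2 (hfull t)] at hlt
  obtain ⟨a, ha⟩ := exists_nextFree_eq_some hfree i
  rw [insertNext_of_nextFree_eq_some ha, trueSet_update_true, card_insert_of_notMem]
  simp [(nextFree_eq_some_iff.1 ha).1]

theorem card_trueSet_foldl_insertNext (l : List (Fin b)) {bm : Fin b → Bool}
    (h : #(trueSet bm) + l.length ≤ b) :
    #(trueSet (l.foldl insertNext bm)) = #(trueSet bm) + l.length := by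
  induction l generalizing bm with
  | nil => rfl
  | cons i l ih =>
    rw [List.length_cons] at h ⊢
    have hi := card_trueSet_insertNext (bm := bm) (by omega) i
    rw [List.foldl_cons, ih (by omega), hi]
    omega

end InsertNext

section BitmapNext

variable {T : Type*} {b : ℕ} [NeZero b] (h : T → Fin b)

theorem bitmapNext_eq_foldl (l : List T) :
    bitmapNext h l = (l.map h).foldl insertNext (fun _ => false) := by
  rw [bitmapNext, List.foldl_map]

theorem card_trueSet_bitmapNext {l : List T} (hl : l.length ≤ b) :
    #(trueSet (bitmapNext h l)) = l.length := by
  rw [bitmapNext_eq_foldl, card_trueSet_foldl_insertNext] <;> simp [trueSet, hl]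

theorem bitmapNext_mono {l₁ l₂ : List T} (hl : l₁.Subperm l₂) :
    bitmapNext h l₁ ≤ bitmapNext h l₂ := by
  obtain ⟨l, hperm, hsub⟩ := hl
  rw [bitmapNext_eq_foldl, bitmapNext_eq_foldl, ← (hperm.map h).foldl_eq]
  exact foldl_insertNext_mono (hsub.map h) le_rfl

end BitmapNext

theorem bitmapNext_overlap_bounds_general {T : Type*} [DecidableEq T] {b : ℕ} [NeZero b]
    (h : T → Fin b) (r s : List T)
    (hr : r.length ≤ b) (hs : s.length ≤ b) :
    (r.toFinset ∩ s.toFinset).card ≤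
        (r.length + s.length - hammingDist (bitmapNext h r) (bitmapNext h s)) / 2 ∧
      (r.length + s.length - hammingDist (bitmapNext h r) (bitmapNext h s)) / 2 ≤
        min r.length s.length := by
  set A := trueSet (bitmapNext h r)
  set B := trueSet (bitmapNext h s)
  set common := r.toFinset ∩ s.toFinset
  have hsub_r : common.toList.Subperm r :=
    common.nodup_toList.subperm fun x hx => by simp_all [common]
  have hsub_s : common.toList.Subperm s :=
    common.nodup_toList.subperm fun x hx => by simp_all [common]
  have hcommon : #common ≤ #(A ∩ B) := calc
    #common = #(trueSet (bitmapNext h common.toList)) :=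
      (length_toList common ▸ card_trueSet_bitmapNext h (hsub_r.length_le.trans hr)).symm
    _ ≤ #(A ∩ B) := card_le_card (subset_inter (trueSet_mono (bitmapNext_mono h hsub_r))
      (trueSet_mono (bitmapNext_mono h hsub_s)))
  have hdist : hammingDist (bitmapNext h r) (bitmapNext h s) + 2 * #(A ∩ B) =
      r.length + s.length := by
    rw [hammingDist_add_two_mul_card_trueSet_inter, card_trueSet_bitmapNext h hr,
      card_trueSet_bitmapNext h hs]
  have hA : #(A ∩ B) ≤ r.length := card_trueSet_bitmapNext h hr ▸ card_le_card inter_subset_left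
  have hB : #(A ∩ B) ≤ s.length := card_trueSet_bitmapNext h hs ▸ card_le_card inter_subset_right
  omega

theorem bitmapNext_overlap_bounds {T : Type*} [DecidableEq T] {b : ℕ} [NeZero b]
    (h : T → Fin b) (r s : List T) (hndr : r.Nodup) (hnds : s.Nodup)
    (hr : r.length ≤ b) (hs : s.length ≤ b) :
    (r.toFinset ∩ s.toFinset).card ≤
        (r.length + s.length - hammingDist (bitmapNext h r) (bitmapNext h s)) / 2 ∧
      (r.length + s.length - hammingDist (bitmapNext h r) (bitmapNext h s)) / 2 ≤
        min r.length s.length :=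
  bitmapNext_overlap_bounds_general h r s hr hs
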